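/- arXiv:physics/0010063 — 5 statements merged into one kernel-verified Lean document; each statement's English description precedes it below -/
import Mathlib

section
/- Let A, B be nonsingular p×p real matrices with |det A| = |det B|, and let S_A = {x : xᵀAᵀAx ≤ 1}, S_B = {x : xᵀBᵀBx ≤ 1} be the corresponding unit balls. Then ∫_{S_A} ‖x‖_B² dx ≥ ∫_{S_B} ‖y‖_B² dy, where ‖x‖_B² = xᵀBᵀBx. -/
open MeasureTheory Matrix Set

lemma quad_eq {p : ℕ} (B : Matrix (Fin p) (Fin p) ℝ) (x : Fin p → ℝ) :
    x ⬝ᵥ (Bᵀ * B) *ᵥ x = (B *ᵥ x) ⬝ᵥ (B *ᵥ x) := by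
  rw [← mulVec_mulVec, dotProduct_mulVec, vecMul_transpose]

lemma quad_cont {p : ℕ} (M : Matrix (Fin p) (Fin p) ℝ) :
    Continuous fun x : Fin p → ℝ => x ⬝ᵥ M *ᵥ x :=
  continuous_id.dotProduct (continuous_const.matrix_mulVec continuous_id)

lemma setS_eq {p : ℕ} (A : Matrix (Fin p) (Fin p) ℝ) (hA : IsUnit A.det) :
    {x : Fin p → ℝ | x ⬝ᵥ (Aᵀ * A) *ᵥ x ≤ 1}
      = (fun y => A⁻¹ *ᵥ y) '' {y : Fin p → ℝ | y ⬝ᵥ y ≤ 1} := by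
  ext x
  constructor
  · intro hx
    refine ⟨A *ᵥ x, ?_, ?_⟩
    · simpa [quad_eq] using hx
    · show A⁻¹ *ᵥ (A *ᵥ x) = x
      rw [mulVec_mulVec, Matrix.nonsing_inv_mul _ hA, one_mulVec]
  · rintro ⟨y, hy, rfl⟩
    simp only [mem_setOf_eq, quad_eq, mulVec_mulVec, Matrix.mul_nonsing_inv _ hA, one_mulVec]
    exact hy

lemma C_compact (p : ℕ) : IsCompact {y : Fin p → ℝ | y ⬝ᵥ y ≤ 1} := by
  have hc : IsClosed {y : Fin p → ℝ | y ⬝ᵥ y ≤ 1} :=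
    isClosed_le (continuous_id.dotProduct continuous_id) continuous_const
  refine Metric.isCompact_of_isClosed_isBounded hc ?_
  have : {y : Fin p → ℝ | y ⬝ᵥ y ≤ 1} ⊆ Set.pi Set.univ (fun _ : Fin p => Set.Icc (-1:ℝ) 1) := by
    intro y hy i _
    have h1 : y i * y i ≤ 1 := by
      refine le_trans ?_ hy
      have : ∀ j ∈ Finset.univ, 0 ≤ y j * y j := fun j _ => mul_self_nonneg _
      exact Finset.single_le_sum this (Finset.mem_univ i)
    constructor <;> nlinarith
  exact (Bornology.IsBounded.pi (fun _ => Metric.isBounded_Icc _ _)).subset this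

/-- Lemma: if `|det A| = |det B|` then `∫_{S_A} ‖x‖_B² dx ≥ ∫_{S_B} ‖y‖_B² dy`. -/
theorem ball_moment_min {p : ℕ} (A B : Matrix (Fin p) (Fin p) ℝ)
    (hA : IsUnit A.det) (hB : IsUnit B.det)
    (hdet : |A.det| = |B.det|) :
    ∫ y in {y : Fin p → ℝ | y ⬝ᵥ (Bᵀ * B) *ᵥ y ≤ 1}, y ⬝ᵥ (Bᵀ * B) *ᵥ y ≤
      ∫ x in {x : Fin p → ℝ | x ⬝ᵥ (Aᵀ * A) *ᵥ x ≤ 1}, x ⬝ᵥ (Bᵀ * B) *ᵥ x := by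
  set SA := {x : Fin p → ℝ | x ⬝ᵥ (Aᵀ * A) *ᵥ x ≤ 1} with hSA
  set SB := {y : Fin p → ℝ | y ⬝ᵥ (Bᵀ * B) *ᵥ y ≤ 1} with hSB
  set Q : (Fin p → ℝ) → ℝ := fun x => x ⬝ᵥ (Bᵀ * B) *ᵥ x with hQ
  set C := {y : Fin p → ℝ | y ⬝ᵥ y ≤ 1} with hC
  -- compactness
  have contInv : ∀ M : Matrix (Fin p) (Fin p) ℝ, Continuous fun y : Fin p → ℝ => M *ᵥ y :=
    fun M => continuous_const.matrix_mulVec continuous_id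
  have hcA : IsCompact SA := by
    rw [hSA, setS_eq A hA]
    exact (C_compact p).image (contInv _)
  have hcB : IsCompact SB := by
    rw [hSB, setS_eq B hB]
    exact (C_compact p).image (contInv _)
  have hmA : MeasurableSet SA := hcA.isClosed.measurableSet
  have hmB : MeasurableSet SB := hcB.isClosed.measurableSet
  -- equal volumes
  have hvol : volume SA = volume SB := by
    have key : ∀ M : Matrix (Fin p) (Fin p) ℝ, IsUnit M.det →
        volume ((fun y => M⁻¹ *ᵥ y) '' C) = ENNReal.ofReal |M.det|⁻¹ * volume C := by
      intro M hM
      have hdet' : LinearMap.det (Matrix.toLin' M⁻¹) = M⁻¹.det := LinearMap.det_toLin' _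
      have himg : (fun y => M⁻¹ *ᵥ y) '' C = (Matrix.toLin' M⁻¹) '' C := by
        rfl
      rw [himg, Measure.addHaar_image_linearMap, hdet', Matrix.det_nonsing_inv,
        Ring.inverse_eq_inv, abs_inv]
    rw [hSA, hSB, setS_eq A hA, setS_eq B hB, key A hA, key B hB, hdet]
  -- integrability and bounds
  have hcont : Continuous Q := quad_cont _
  have hiA : IntegrableOn Q SA := hcont.continuousOn.integrableOn_compact hcA
  have hiB : IntegrableOn Q SB := hcont.continuousOn.integrableOn_compact hcB
  have hfinA : volume SA ≠ ⊤ := hcA.measure_lt_top.ne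
  have hfinB : volume SB ≠ ⊤ := hcB.measure_lt_top.ne
  -- split integrals
  have splitA := integral_inter_add_diff (μ := volume) (f := Q) hmB hiA
  have splitB := integral_inter_add_diff (μ := volume) (f := Q) hmA hiB
  -- equal diff volumes
  have hvd : volume (SB \ SA) = volume (SA \ SB) := by
    have h1 : volume (SA ∩ SB) + volume (SA \ SB) = volume SA := measure_inter_add_diff _ hmB
    have h2 : volume (SA ∩ SB) + volume (SB \ SA) = volume SB := by
      rw [Set.inter_comm]; exact measure_inter_add_diff _ hmA
    have hfin : volume (SA ∩ SB) ≠ ⊤ :=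
      ne_top_of_le_ne_top hfinA (measure_mono Set.inter_subset_left)
    have := h1.trans (hvol.trans h2.symm)
    exact (ENNReal.add_right_inj hfin).mp this.symm
  -- compare tails
  have tail_le : ∫ x in SB \ SA, Q x ≤ ∫ x in SA \ SB, Q x := by
    have h1 : ∫ x in SB \ SA, Q x ≤ ∫ _x in SB \ SA, (1:ℝ) := by
      refine setIntegral_mono_on (hiB.mono_set Set.diff_subset) ?_
        (hmB.diff hmA) (fun x hx => hx.1)
      exact (integrableOn_const_iff (C := (1:ℝ))).mpr (Or.inr (lt_of_le_of_lt (measure_mono Set.diff_subset)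
        hcB.measure_lt_top))
    have h2 : ∫ _x in SA \ SB, (1:ℝ) ≤ ∫ x in SA \ SB, Q x := by
      refine setIntegral_mono_on ?_ (hiA.mono_set Set.diff_subset)
        (hmA.diff hmB) (fun x hx => le_of_lt (lt_of_not_ge hx.2))
      exact (integrableOn_const_iff (C := (1:ℝ))).mpr (Or.inr (lt_of_le_of_lt (measure_mono Set.diff_subset)
        hcA.measure_lt_top))
    have h3 : ∫ _x in SB \ SA, (1:ℝ) = ∫ _x in SA \ SB, (1:ℝ) := by
      rw [setIntegral_const, setIntegral_const, measureReal_def, measureReal_def, hvd]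
    linarith
  have hint : ∫ x in SA ∩ SB, Q x = ∫ x in SB ∩ SA, Q x := by rw [Set.inter_comm]
  show (∫ x in SB, Q x) ≤ ∫ x in SA, Q x
  linarith [splitA, splitB, tail_le, hint]
end

section
/- Let H be a real symmetric positive definite p×p matrix, and let Ĥ^{1/2} = H^{1/2}/|det H^{1/2}|^{1/p} be the normalized positive square root (with determinant 1). Then for every p×p real matrix A with |det A| = 1, ∫_{S_A} xᵀHx dx ≥ ∫_{S_{Ĥ^{1/2}}} xᵀHx dx, where S_M = {x : xᵀMᵀMx ≤ 1}. -/
open MeasureTheory Matrix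

open scoped ComplexOrder in
/-- The old Mathlib `Matrix.PosSemidef.sqrt` (removed upstream), with its original definition. -/
noncomputable def Matrix.PosSemidef.sqrt {n 𝕜 : Type*} [Fintype n] [DecidableEq n] [RCLike 𝕜]
    {A : Matrix n n 𝕜} (hA : A.PosSemidef) : Matrix n n 𝕜 :=
  hA.1.eigenvectorUnitary.1 * diagonal ((↑) ∘ (√·) ∘ hA.1.eigenvalues) *
    (star hA.1.eigenvectorUnitary : Matrix n n 𝕜)

lemma key_cov {p : ℕ} (T : Matrix (Fin p) (Fin p) ℝ) (hT : |T.det| = 1)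
    (g : (Fin p → ℝ) → ℝ) :
    ∫ x in {x : Fin p → ℝ | x ⬝ᵥ (Tᵀ * T) *ᵥ x ≤ 1}, g (T *ᵥ x) =
      ∫ y in {y : Fin p → ℝ | y ⬝ᵥ y ≤ 1}, g y := by
  have hdet : T.det ≠ 0 := fun h => by simp [h] at hT
  have hinv : Invertible T := T.invertibleOfIsUnitDet (isUnit_iff_ne_zero.2 hdet)
  let e : (Fin p → ℝ) ≃ₗ[ℝ] (Fin p → ℝ) := T.toLinearEquiv' hinv
  have hcoe : ∀ x, e x = T *ᵥ x := fun x => rfl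
  -- measure preserving
  have hld : LinearMap.det (Matrix.toLin' T) = T.det := LinearMap.det_toLin' T
  have hmap : Measure.map (Matrix.toLin' T) (volume : Measure (Fin p → ℝ)) = volume := by
    rw [Real.map_linearMap_volume_pi_eq_smul_volume_pi (by rw [hld]; exact hdet)]
    rw [hld]
    rw [abs_inv, hT]
    simp
  have hmp : MeasurePreserving (fun x => T *ᵥ x) (volume : Measure (Fin p → ℝ)) volume := by
    refine ⟨?_, ?_⟩
    · exact (Matrix.toLin' T).continuous_of_finiteDimensional.measurable
    · have : (fun x => T *ᵥ x) = ⇑(Matrix.toLin' T) := by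
        funext x; rw [Matrix.toLin'_apply]
      rw [this, hmap]
  have hemb : MeasurableEmbedding (fun x => T *ᵥ x) := by
    have : (fun x : Fin p → ℝ => T *ᵥ x) = ⇑(e.toContinuousLinearEquiv.toHomeomorph) := by
      funext x; exact (hcoe x).symm
    rw [this]
    exact Homeomorph.measurableEmbedding _
  have hpre : (fun x => T *ᵥ x) ⁻¹' {y : Fin p → ℝ | y ⬝ᵥ y ≤ 1} =
      {x : Fin p → ℝ | x ⬝ᵥ (Tᵀ * T) *ᵥ x ≤ 1} := by
    ext x
    simp only [Set.mem_preimage, Set.mem_setOf_eq]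
    rw [← Matrix.mulVec_mulVec, Matrix.dotProduct_mulVec x Tᵀ, Matrix.vecMul_transpose]
  rw [← hpre]
  exact hmp.setIntegral_preimage_emb hemb g _

lemma cont_quad {p : ℕ} (M : Matrix (Fin p) (Fin p) ℝ) :
    Continuous (fun y : Fin p → ℝ => y ⬝ᵥ (M *ᵥ y)) := by
  have : (fun y : Fin p → ℝ => y ⬝ᵥ (M *ᵥ y)) =
      fun y => ∑ i, y i * ∑ j, M i j * y j := by
    funext y; rfl
  rw [this]
  exact continuous_finset_sum _ fun i _ =>
    ((continuous_apply i).mul (continuous_finset_sum _ fun j _ =>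
      continuous_const.mul (continuous_apply j)))

lemma isCompact_U {p : ℕ} : IsCompact {y : Fin p → ℝ | y ⬝ᵥ y ≤ 1} := by
  have hcl : IsClosed {y : Fin p → ℝ | y ⬝ᵥ y ≤ 1} := by
    have : Continuous (fun y : Fin p → ℝ => y ⬝ᵥ ((1 : Matrix (Fin p) (Fin p) ℝ) *ᵥ y)) :=
      cont_quad 1
    simp only [Matrix.one_mulVec] at this
    exact isClosed_le this continuous_const
  have hbd : Bornology.IsBounded {y : Fin p → ℝ | y ⬝ᵥ y ≤ 1} := by
    refine (Metric.isBounded_closedBall (x := (0 : Fin p → ℝ)) (r := 1)).subset ?_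
    intro y hy
    simp only [Set.mem_setOf_eq] at hy
    rw [Metric.mem_closedBall, dist_zero_right]
    rw [pi_norm_le_iff_of_nonneg zero_le_one]
    intro i
    rw [Real.norm_eq_abs, abs_le_one_iff_mul_self_le_one]
    calc y i * y i ≤ ∑ j, y j * y j :=
          Finset.single_le_sum (f := fun j => y j * y j)
            (fun j _ => mul_self_nonneg _) (Finset.mem_univ i)
      _ ≤ 1 := hy
  exact Metric.isCompact_of_isClosed_isBounded hcl hbd

lemma measurableSet_U {p : ℕ} : MeasurableSet {y : Fin p → ℝ | y ⬝ᵥ y ≤ 1} := by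
  have : Continuous (fun y : Fin p → ℝ => y ⬝ᵥ ((1 : Matrix (Fin p) (Fin p) ℝ) *ᵥ y)) :=
    cont_quad 1
  simp only [Matrix.one_mulVec] at this
  exact (isClosed_le this continuous_const).measurableSet

lemma moment_off {p : ℕ} {i j : Fin p} (hij : i ≠ j) :
    ∫ y in {y : Fin p → ℝ | y ⬝ᵥ y ≤ 1}, y i * y j = 0 := by
  set T : Matrix (Fin p) (Fin p) ℝ := Matrix.diagonal (fun k => if k = i then -1 else 1) with hTdef
  have hTT : Tᵀ * T = 1 := by
    rw [hTdef, Matrix.diagonal_transpose, Matrix.diagonal_mul_diagonal]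
    ext a b
    rcases eq_or_ne a b with rfl | hab
    · by_cases h : a = i <;> simp [h]
    · simp [Matrix.diagonal_apply_ne _ hab, Matrix.one_apply_ne hab]
  have hdet : |T.det| = 1 := by
    rw [hTdef, Matrix.det_diagonal]
    rw [Finset.prod_ite_eq' Finset.univ i (fun _ => (-1 : ℝ))]
    simp
  have h := key_cov T hdet (fun y => y i * y j)
  simp only [hTT, Matrix.one_mulVec] at h
  have hmv : ∀ (x : Fin p → ℝ), (T *ᵥ x) i * (T *ᵥ x) j = -(x i * x j) := by
    intro x
    rw [hTdef]
    rw [Matrix.mulVec_diagonal, Matrix.mulVec_diagonal]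
    simp [hij.symm]
  simp only [hmv] at h
  rw [integral_neg] at h
  linarith

lemma moment_perm {p : ℕ} (σ : Equiv.Perm (Fin p)) (g : (Fin p → ℝ) → ℝ) :
    ∫ y in {y : Fin p → ℝ | y ⬝ᵥ y ≤ 1}, g (fun k => y (σ k)) =
      ∫ y in {y : Fin p → ℝ | y ⬝ᵥ y ≤ 1}, g y := by
  set T : Matrix (Fin p) (Fin p) ℝ := σ.toPEquiv.toMatrix with hTdef
  have happ : ∀ a b, T a b = if σ a = b then (1:ℝ) else 0 := by
    intro a b
    rw [hTdef, PEquiv.toMatrix_apply]; simp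
  have hmv : ∀ (x : Fin p → ℝ) k, (T *ᵥ x) k = x (σ k) := by
    intro x k
    simp only [Matrix.mulVec, dotProduct, happ, ite_mul, one_mul, zero_mul]
    rw [Finset.sum_ite_eq Finset.univ (σ k) x]
    simp
  have hTT : Tᵀ * T = 1 := by
    ext a b
    rw [Matrix.mul_apply, Matrix.one_apply]
    simp only [Matrix.transpose_apply, happ]
    have hre : (∑ x, (if σ x = a then (1:ℝ) else 0) * if σ x = b then 1 else 0) =
        ∑ l, (if l = a then (1:ℝ) else 0) * if l = b then 1 else 0 :=
      Fintype.sum_equiv σ _ _ (fun x => rfl)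
    rw [hre]
    simp [ite_mul, Finset.sum_ite_eq, eq_comm]
  have hdet : |T.det| = 1 := by
    rw [hTdef]
    have := Matrix.det_permutation (R := ℝ) σ
    rw [Equiv.Perm.permMatrix] at this
    rw [this]
    rcases Int.units_eq_one_or (Equiv.Perm.sign σ) with h | h <;> simp [h]
  have h := key_cov T hdet g
  simp only [hTT, Matrix.one_mulVec] at h
  have : ∀ x : Fin p → ℝ, g (T *ᵥ x) = g (fun k => x (σ k)) := by
    intro x; congr 1; funext k; exact hmv x k
  simp only [this] at h
  exact h

lemma moment_eq {p : ℕ} (i j : Fin p) :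
    ∫ y in {y : Fin p → ℝ | y ⬝ᵥ y ≤ 1}, y i * y i =
      ∫ y in {y : Fin p → ℝ | y ⬝ᵥ y ≤ 1}, y j * y j := by
  have h := moment_perm (Equiv.swap i j) (fun y => y j * y j)
  simp only [Equiv.swap_apply_right] at h
  exact h

lemma quad_int {p : ℕ} (i0 : Fin p) (M : Matrix (Fin p) (Fin p) ℝ) :
    ∫ y in {y : Fin p → ℝ | y ⬝ᵥ y ≤ 1}, y ⬝ᵥ (M *ᵥ y) =
      M.trace * ∫ y in {y : Fin p → ℝ | y ⬝ᵥ y ≤ 1}, y i0 * y i0 := by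
  have hint : ∀ (i j : Fin p),
      IntegrableOn (fun y : Fin p → ℝ => y i * y j) {y : Fin p → ℝ | y ⬝ᵥ y ≤ 1} :=
    fun i j => ((continuous_apply i).mul (continuous_apply j)).continuousOn.integrableOn_compact isCompact_U
  have step1 : ∫ y in {y : Fin p → ℝ | y ⬝ᵥ y ≤ 1}, y ⬝ᵥ (M *ᵥ y) =
      ∫ y in {y : Fin p → ℝ | y ⬝ᵥ y ≤ 1}, ∑ i, ∑ j, M i j * (y i * y j) := by
    apply integral_congr_ae
    filter_upwards with y
    simp only [dotProduct, Matrix.mulVec, Finset.mul_sum]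
    exact Finset.sum_congr rfl fun i _ => Finset.sum_congr rfl fun j _ => by ring
  rw [step1]
  erw [integral_finset_sum _ (fun i _ =>
    integrable_finset_sum _ (fun j _ => (hint i j).const_mul _))]
  have step2 : ∀ i : Fin p,
      (∫ y in {y : Fin p → ℝ | y ⬝ᵥ y ≤ 1}, ∑ j, M i j * (y i * y j)) =
        M i i * ∫ y in {y : Fin p → ℝ | y ⬝ᵥ y ≤ 1}, y i0 * y i0 := by
    intro i
    erw [integral_finset_sum _ (fun j _ => (hint i j).const_mul _)]
    rw [Finset.sum_eq_single i]
    · rw [MeasureTheory.integral_const_mul, moment_eq i i0]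
    · intro j _ hji
      rw [MeasureTheory.integral_const_mul, moment_off (Ne.symm hji), mul_zero]
    · intro h; exact absurd (Finset.mem_univ i) h
  simp only [step2]
  rw [Matrix.trace, ← Finset.sum_mul]
  rfl

lemma posdef_conj {p : ℕ} {H : Matrix (Fin p) (Fin p) ℝ} (hH : H.PosDef)
    (B : Matrix (Fin p) (Fin p) ℝ) (hB : B.det ≠ 0) :
    ((Bᵀ * H) * B).PosDef := by
  have hBconj : Bᴴ = Bᵀ := by
    ext a b; simp [Matrix.conjTranspose_apply]
  rw [Matrix.posDef_iff_dotProduct_mulVec]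
  constructor
  · rw [← hBconj]
    exact Matrix.isHermitian_conjTranspose_mul_mul B hH.1
  · intro x hx
    have hxB : B *ᵥ x ≠ 0 := by
      intro h
      apply hx
      have hinv : Invertible B := B.invertibleOfIsUnitDet (isUnit_iff_ne_zero.2 hB)
      have := congrArg (fun v => B⁻¹ *ᵥ v) h
      simpa [Matrix.mulVec_mulVec, Matrix.nonsing_inv_mul B (isUnit_iff_ne_zero.2 hB)] using this
    have := hH.dotProduct_mulVec_pos hxB
    rw [← hBconj] at *
    simpa only [star_mulVec, Matrix.dotProduct_mulVec, Matrix.vecMul_vecMul] using this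

lemma trace_eq_sum_eig {p : ℕ} {M : Matrix (Fin p) (Fin p) ℝ} (hM : M.IsHermitian) :
    M.trace = ∑ i, hM.eigenvalues i := by
  conv_lhs => rw [hM.spectral_theorem, Unitary.conjStarAlgAut_apply]
  rw [Matrix.trace_mul_cycle]
  rw [Unitary.coe_star_mul_self (hM.eigenvectorUnitary)]
  rw [Matrix.one_mul, Matrix.trace_diagonal]
  simp

lemma trace_amgm {p : ℕ} (hp : 0 < p) {M : Matrix (Fin p) (Fin p) ℝ} (hM : M.PosDef) :
    (p : ℝ) * M.det ^ ((1:ℝ)/p) ≤ M.trace := by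
  set lam := hM.1.eigenvalues with hlam
  have hpos : ∀ i, 0 < lam i := hM.eigenvalues_pos
  have hdet : M.det = ∏ i, lam i := by
    rw [hM.1.det_eq_prod_eigenvalues]; simp; rfl
  have hsum : M.trace = ∑ i, lam i := trace_eq_sum_eig hM.1
  have hp' : (p : ℝ) ≠ 0 := Nat.cast_ne_zero.2 hp.ne'
  have amgm := Real.geom_mean_le_arith_mean_weighted Finset.univ
    (fun _ => 1 / (p : ℝ)) lam (fun i _ => by positivity)
    (by simp [Finset.card_univ]; field_simp) (fun i _ => (hpos i).le)
  rw [Real.finset_prod_rpow Finset.univ lam (fun i _ => (hpos i).le)] at amgm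
  have hs : ∑ i, (1 / (p : ℝ)) * lam i = (1 / p) * ∑ i, lam i := by
    rw [Finset.mul_sum]
  rw [hs] at amgm
  rw [hdet, hsum]
  rw [div_mul_eq_mul_div, one_mul] at amgm
  rw [mul_comm]
  have hppos : (0:ℝ) < p := Nat.cast_pos.2 hp
  calc (∏ i, lam i) ^ ((1:ℝ)/p) * p ≤ ((∑ i, lam i) / p) * p := by
        apply mul_le_mul_of_nonneg_right amgm hppos.le
    _ = ∑ i, lam i := by field_simp

lemma reduce {p : ℕ} (H T : Matrix (Fin p) (Fin p) ℝ) (hT : |T.det| = 1) :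
    ∫ x in {x : Fin p → ℝ | x ⬝ᵥ (Tᵀ * T) *ᵥ x ≤ 1}, x ⬝ᵥ H *ᵥ x =
      ∫ y in {y : Fin p → ℝ | y ⬝ᵥ y ≤ 1}, y ⬝ᵥ (((T⁻¹)ᵀ * H * T⁻¹) *ᵥ y) := by
  have hdet : T.det ≠ 0 := fun h => by simp [h] at hT
  have hu : IsUnit T.det := isUnit_iff_ne_zero.2 hdet
  have halg : Tᵀ * ((T⁻¹)ᵀ * H * T⁻¹) * T = H := by
    have h1 : T⁻¹ * T = 1 := Matrix.nonsing_inv_mul T hu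
    have h2 : Tᵀ * (T⁻¹)ᵀ = 1 := by
      rw [Matrix.transpose_nonsing_inv]
      exact Matrix.mul_nonsing_inv Tᵀ (by rwa [Matrix.det_transpose])
    calc Tᵀ * ((T⁻¹)ᵀ * H * T⁻¹) * T = (Tᵀ * (T⁻¹)ᵀ) * H * (T⁻¹ * T) := by
          simp only [Matrix.mul_assoc]
      _ = H := by rw [h1, h2, Matrix.one_mul, Matrix.mul_one]
  rw [← key_cov T hT (fun y => y ⬝ᵥ (((T⁻¹)ᵀ * H * T⁻¹) *ᵥ y))]
  apply integral_congr_ae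
  filter_upwards with x
  conv_lhs => rw [← halg]
  rw [← Matrix.mulVec_mulVec, ← Matrix.mulVec_mulVec,
    Matrix.dotProduct_mulVec x Tᵀ, Matrix.vecMul_transpose]

lemma old_sqrt_mul_self {p : ℕ} {H : Matrix (Fin p) (Fin p) ℝ} (hA : H.PosSemidef) :
    PosSemidef.sqrt hA * PosSemidef.sqrt hA = H := by
  have hUU : (star hA.1.eigenvectorUnitary : Matrix (Fin p) (Fin p) ℝ) *
      hA.1.eigenvectorUnitary = 1 := Unitary.coe_star_mul_self _
  conv_rhs => rw [hA.1.spectral_theorem, Unitary.conjStarAlgAut_apply]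
  simp only [PosSemidef.sqrt, Matrix.mul_assoc]
  rw [← Matrix.mul_assoc (star hA.1.eigenvectorUnitary : Matrix (Fin p) (Fin p) ℝ), hUU,
    Matrix.one_mul, ← Matrix.mul_assoc (diagonal _) (diagonal _), diagonal_mul_diagonal]
  congr 3
  funext i
  simp [Real.mul_self_sqrt (hA.eigenvalues_nonneg i)]

lemma old_sqrt_herm {p : ℕ} {H : Matrix (Fin p) (Fin p) ℝ} (hA : H.PosSemidef) :
    (PosSemidef.sqrt hA)ᴴ = PosSemidef.sqrt hA := by
  simp only [PosSemidef.sqrt, conjTranspose_mul, diagonal_conjTranspose, Unitary.coe_star,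
    star_eq_conjTranspose, conjTranspose_conjTranspose, Matrix.mul_assoc]
  rfl

lemma old_sqrt_det_nonneg {p : ℕ} {H : Matrix (Fin p) (Fin p) ℝ} (hA : H.PosSemidef) :
    0 ≤ (PosSemidef.sqrt hA).det := by
  have hUU : (hA.1.eigenvectorUnitary : Matrix (Fin p) (Fin p) ℝ) *
      (star hA.1.eigenvectorUnitary : Matrix (Fin p) (Fin p) ℝ) = 1 :=
    Unitary.coe_mul_star_self _
  have h1 := congrArg Matrix.det hUU
  rw [Matrix.det_mul, Matrix.det_one] at h1
  unfold PosSemidef.sqrt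
  rw [Matrix.det_mul, Matrix.det_mul, mul_right_comm, h1, one_mul, Matrix.det_diagonal]
  exact Finset.prod_nonneg fun i _ => by simp [Real.sqrt_nonneg]

/-- The normalized positive square root of the Hessian minimizes the bias
functional `∫_{S_A} xᵀHx dx` over unit-determinant metrics. -/
theorem hessian_sqrt_optimal {p : ℕ} (H : Matrix (Fin p) (Fin p) ℝ)
    (hH : H.PosDef) (A : Matrix (Fin p) (Fin p) ℝ) (hA : |A.det| = 1) :
    ∫ x in {x : Fin p → ℝ |
        x ⬝ᵥ (((|(PosSemidef.sqrt hH.posSemidef).det| ^ ((1:ℝ)/p))⁻¹ • PosSemidef.sqrt hH.posSemidef)ᵀ *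
          ((|(PosSemidef.sqrt hH.posSemidef).det| ^ ((1:ℝ)/p))⁻¹ • PosSemidef.sqrt hH.posSemidef)) *ᵥ x ≤ 1},
        x ⬝ᵥ H *ᵥ x ≤
      ∫ x in {x : Fin p → ℝ | x ⬝ᵥ (Aᵀ * A) *ᵥ x ≤ 1}, x ⬝ᵥ H *ᵥ x := by
  rcases Nat.eq_zero_or_pos p with hp | hp
  · subst hp
    have hz : ∀ x : Fin 0 → ℝ, x ⬝ᵥ H *ᵥ x = 0 := by
      intro x; simp [dotProduct]
    simp only [hz, integral_zero]
    exact le_rfl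
  set Q : Matrix (Fin p) (Fin p) ℝ := PosSemidef.sqrt hH.posSemidef with hQdef
  set c : ℝ := (|Q.det| ^ ((1:ℝ)/p))⁻¹ with hcdef
  set B : Matrix (Fin p) (Fin p) ℝ := c • Q with hBdef
  have hQQ : Q * Q = H := old_sqrt_mul_self hH.posSemidef
  have hQherm : Qᴴ = Q := old_sqrt_herm hH.posSemidef
  have hQsym : Qᵀ = Q := by
    ext a b
    have h := congrFun (congrFun hQherm a) b
    simpa [Matrix.conjTranspose_apply] using h
  have hdetH : 0 < H.det := hH.det_pos
  have hdetHQ : H.det = Q.det * Q.det := by rw [← hQQ, Matrix.det_mul]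
  have hdetQnn : 0 ≤ Q.det := old_sqrt_det_nonneg hH.posSemidef
  have hdetQ : 0 < Q.det := by
    rcases hdetQnn.lt_or_eq with h | h
    · exact h
    · rw [hdetHQ, ← h, mul_zero] at hdetH; exact absurd hdetH (lt_irrefl 0)
  have habs : |Q.det| = Q.det := abs_of_pos hdetQ
  have hp' : (p : ℝ) ≠ 0 := Nat.cast_ne_zero.2 hp.ne'
  have hrp : (Q.det ^ ((1:ℝ)/p)) ^ (p : ℕ) = Q.det := by
    rw [← Real.rpow_natCast (Q.det ^ ((1:ℝ)/p)) p, ← Real.rpow_mul hdetQ.le]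
    rw [one_div, inv_mul_cancel₀ hp', Real.rpow_one]
  have hcpos : 0 < c := by
    rw [hcdef, habs]
    exact inv_pos.2 (Real.rpow_pos_of_pos hdetQ _)
  have hBdet : |B.det| = 1 := by
    rw [hBdef, Matrix.det_smul, Fintype.card_fin, abs_mul, abs_pow, abs_of_pos hcpos, habs]
    rw [hcdef, habs, inv_pow, hrp]
    exact inv_mul_cancel₀ hdetQ.ne'
  have hdetA : A.det ≠ 0 := fun h => by simp [h] at hA
  have hdetB : B.det ≠ 0 := fun h => by simp [h] at hBdet
  -- inverse of B
  have hBinv : B⁻¹ = c⁻¹ • Q⁻¹ := by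
    apply Matrix.inv_eq_right_inv
    rw [hBdef, Matrix.smul_mul, Matrix.mul_smul, smul_smul, mul_inv_cancel₀ hcpos.ne']
    rw [Matrix.mul_nonsing_inv Q (isUnit_iff_ne_zero.2 hdetQ.ne'), one_smul]
  have hone : Q⁻¹ * H * Q⁻¹ = 1 := by
    rw [← hQQ, ← Matrix.mul_assoc Q⁻¹ Q Q,
      Matrix.nonsing_inv_mul Q (isUnit_iff_ne_zero.2 hdetQ.ne'), Matrix.one_mul,
      Matrix.mul_nonsing_inv Q (isUnit_iff_ne_zero.2 hdetQ.ne')]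
  have hNB : (B⁻¹)ᵀ * H * B⁻¹ = (c⁻¹ * c⁻¹) • (1 : Matrix (Fin p) (Fin p) ℝ) := by
    simp only [hBinv, Matrix.transpose_smul, Matrix.transpose_nonsing_inv, hQsym,
      Matrix.smul_mul, Matrix.mul_smul, smul_smul, hone]
  have i0 : Fin p := ⟨0, hp⟩
  have hm : (0:ℝ) ≤ ∫ y in {y : Fin p → ℝ | y ⬝ᵥ y ≤ 1}, y i0 * y i0 :=
    setIntegral_nonneg measurableSet_U (fun y _ => mul_self_nonneg _)
  -- the two reductions
  rw [reduce H B hBdet, reduce H A hA, quad_int i0, quad_int i0]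
  apply mul_le_mul_of_nonneg_right _ hm
  -- trace comparison
  have htrB : ((B⁻¹)ᵀ * H * B⁻¹).trace = (p : ℝ) * H.det ^ ((1:ℝ)/p) := by
    rw [hNB, Matrix.trace_smul, Matrix.trace_one]
    have h2 : H.det ^ ((1:ℝ)/p) = Q.det ^ ((1:ℝ)/p) * Q.det ^ ((1:ℝ)/p) := by
      rw [hdetHQ, Real.mul_rpow hdetQ.le hdetQ.le]
    rw [h2, hcdef, habs, inv_inv]
    simp [Fintype.card_fin, smul_eq_mul]
    ring
  have hdetAinv : A⁻¹.det = (A.det)⁻¹ := by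
    rw [Matrix.det_nonsing_inv, Ring.inverse_eq_inv']
  have hNA : ((A⁻¹)ᵀ * H * A⁻¹).PosDef := posdef_conj hH A⁻¹ (by
    rw [hdetAinv]; exact inv_ne_zero hdetA)
  have hA2 : A.det * A.det = 1 := by
    have h := sq_abs A.det
    rw [hA] at h
    nlinarith [sq_nonneg A.det]
  have hAinv_eq : (A.det)⁻¹ = A.det := inv_eq_of_mul_eq_one_right hA2
  have hdetNA : ((A⁻¹)ᵀ * H * A⁻¹).det = H.det := by
    rw [Matrix.det_mul, Matrix.det_mul, Matrix.det_transpose, hdetAinv, hAinv_eq]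
    linear_combination H.det * hA2
  have := trace_amgm hp hNA
  rw [hdetNA] at this
  rw [htrB]
  exact this
end

section
/- Let f(z) = exp(L(y)) be a radially symmetric density with y = −(1/2)(z−μ)ᵀV⁻¹(z−μ), V symmetric positive definite, and suppose L′(y) ≠ 0. Then the Hessian H(z) of f is singular at z ≠ μ if and only if L′(y) + (d/dy) log L′(y) = −1/(2y). -/
open Matrix Real

variable {p : ℕ}

noncomputable def auxDP (v : Fin p → ℝ) : (Fin p → ℝ) →L[ℝ] ℝ :=
  ∑ j, v j • ContinuousLinearMap.proj j

noncomputable def auxD (A : Matrix (Fin p) (Fin p) ℝ) (μ w : Fin p → ℝ) :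
    (Fin p → ℝ) →L[ℝ] ℝ :=
  ∑ i, ((w i - μ i) • (∑ j, A i j • (ContinuousLinearMap.proj j : (Fin p → ℝ) →L[ℝ] ℝ))
    + (∑ j, A i j * (w j - μ j)) • (ContinuousLinearMap.proj i : (Fin p → ℝ) →L[ℝ] ℝ))

lemma auxD_single (A : Matrix (Fin p) (Fin p) ℝ) (μ w : Fin p → ℝ) (k : Fin p) :
    auxD A μ w (Pi.single k 1) = (Aᵀ *ᵥ (w - μ)) k + (A *ᵥ (w - μ)) k := by
  simp only [auxD, ContinuousLinearMap.sum_apply, ContinuousLinearMap.add_apply,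
    ContinuousLinearMap.smul_apply, ContinuousLinearMap.proj_apply, smul_eq_mul,
    Pi.single_apply, mulVec, dotProduct, transpose_apply, Pi.sub_apply]
  rw [Finset.sum_add_distrib]
  congr 1
  · simp [mul_ite, Finset.mul_sum]
    exact Finset.sum_congr rfl fun i _ => by ring
  · simp [mul_ite]

lemma aux_hasFDerivAt_quad (A : Matrix (Fin p) (Fin p) ℝ) (μ w : Fin p → ℝ) :
    HasFDerivAt (fun x : Fin p → ℝ => (x - μ) ⬝ᵥ A *ᵥ (x - μ)) (auxD A μ w) w := by
  have h : ∀ i : Fin p, HasFDerivAt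
      (fun x : Fin p → ℝ => (x i - μ i) * ∑ j, A i j * (x j - μ j))
      ((w i - μ i) • (∑ j, A i j • (ContinuousLinearMap.proj j : (Fin p → ℝ) →L[ℝ] ℝ))
        + (∑ j, A i j * (w j - μ j)) • (ContinuousLinearMap.proj i : (Fin p → ℝ) →L[ℝ] ℝ)) w := by
    intro i
    have h1 : HasFDerivAt (fun x : Fin p → ℝ => x i - μ i)
        (ContinuousLinearMap.proj i : (Fin p → ℝ) →L[ℝ] ℝ) w := by
      have := ((ContinuousLinearMap.proj i : (Fin p → ℝ) →L[ℝ] ℝ).hasFDerivAt (x := w)).sub_const (μ i)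
      simpa using this
    have h2 : HasFDerivAt (fun x : Fin p → ℝ => ∑ j, A i j * (x j - μ j))
        (∑ j, A i j • (ContinuousLinearMap.proj j : (Fin p → ℝ) →L[ℝ] ℝ)) w := by
      apply HasFDerivAt.fun_sum
      intro j _
      have := (((ContinuousLinearMap.proj j : (Fin p → ℝ) →L[ℝ] ℝ).hasFDerivAt (x := w)).sub_const (μ j)).const_mul (A i j)
      simpa using this
    exact h1.mul h2
  have hsum := HasFDerivAt.fun_sum (fun i (_ : i ∈ Finset.univ) => h i)
  have hfun : (fun x : Fin p → ℝ => (x - μ) ⬝ᵥ A *ᵥ (x - μ))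
      = fun x : Fin p → ℝ => ∑ i, (x i - μ i) * ∑ j, A i j * (x j - μ j) := by
    funext x
    simp [dotProduct, mulVec]
  rw [hfun]
  exact hsum

lemma aux_alg (S A B Y : ℝ) (hS : S ≠ 0) (hA : A ≠ 0) (hY : Y ≠ 0) :
    1 + S * (A * A + B) / -(S * A) * (-2 * Y) = 0 ↔ A + B / A = -(1 / (2 * Y)) := by
  have h1 : S * (A * A + B) / -(S * A) * (-2 * Y) = 2 * Y * (A * A + B) / A := by
    field_simp
  rw [h1]
  constructor
  · intro h
    field_simp at h ⊢
    nlinarith [h]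
  · intro h
    field_simp at h ⊢
    nlinarith [h]

/-- Singular-Hessian criterion for a radially symmetric density: the Hessian of
`f(z) = exp(L(y))`, `y = -(1/2)(z-μ)ᵀV⁻¹(z-μ)`, is singular at `z ≠ μ` iff
`L′(y) + (d/dy) log L′(y) = -1/(2y)`. -/
theorem hessian_singular_iff {p : ℕ}
    (V : Matrix (Fin p) (Fin p) ℝ) (hV : V.PosDef) (μ : Fin p → ℝ)
    (L : ℝ → ℝ) (hL : ContDiff ℝ 2 L)
    (f : (Fin p → ℝ) → ℝ)
    (hf : ∀ z, f z = Real.exp (L (-(1/2) * ((z - μ) ⬝ᵥ V⁻¹ *ᵥ (z - μ)))))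
    (z : Fin p → ℝ) (hz : z ≠ μ)
    (hL' : deriv L (-(1/2) * ((z - μ) ⬝ᵥ V⁻¹ *ᵥ (z - μ))) ≠ 0)
    (H : Matrix (Fin p) (Fin p) ℝ)
    (hH : ∀ i j, H i j =
      fderiv ℝ (fun w => fderiv ℝ f w (Pi.single j 1)) z (Pi.single i 1)) :
    ¬ IsUnit H.det ↔
      deriv L (-(1/2) * ((z - μ) ⬝ᵥ V⁻¹ *ᵥ (z - μ))) +
        deriv (fun t => Real.log (deriv L t)) (-(1/2) * ((z - μ) ⬝ᵥ V⁻¹ *ᵥ (z - μ))) =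
      -(1 / (2 * (-(1/2) * ((z - μ) ⬝ᵥ V⁻¹ *ᵥ (z - μ))))) := by
  classical
  have hz' : z - μ ≠ 0 := sub_ne_zero.mpr hz
  have hVdet : IsUnit V.det := hV.det_pos.ne'.isUnit
  have hApd : (V⁻¹).PosDef := hV.inv
  have hsym : ∀ i j, V⁻¹ j i = V⁻¹ i j := fun i j => by
    simpa using hApd.isHermitian.apply i j
  have hAT : (V⁻¹)ᵀ = V⁻¹ := by
    ext i j; simpa using hsym i j
  set y := -(1/2 : ℝ) * ((z - μ) ⬝ᵥ V⁻¹ *ᵥ (z - μ)) with hy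
  set q : (Fin p → ℝ) → ℝ := fun x => -(1/2 : ℝ) * ((x - μ) ⬝ᵥ V⁻¹ *ᵥ (x - μ)) with hqdef
  have hqz : q z = y := by rw [hqdef]
  have hq : ∀ w, HasFDerivAt q ((-(1/2:ℝ)) • auxD V⁻¹ μ w) w := fun w =>
    (aux_hasFDerivAt_quad V⁻¹ μ w).const_mul _
  have hDq_single : ∀ (w : Fin p → ℝ) (i : Fin p),
      ((-(1/2:ℝ)) • auxD V⁻¹ μ w) (Pi.single i 1) = -(V⁻¹ *ᵥ (w - μ)) i := by
    intro w i
    rw [ContinuousLinearMap.smul_apply, auxD_single, hAT, smul_eq_mul]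
    ring
  have h211 : (2 : WithTop ℕ∞) = 1 + 1 := by norm_num
  rw [h211] at hL
  have hLdiff : Differentiable ℝ L := (contDiff_succ_iff_deriv.mp hL).1
  have hdLdiff : Differentiable ℝ (deriv L) :=
    ((contDiff_succ_iff_deriv.mp hL).2.2).differentiable one_ne_zero
  have hfD : ∀ w, HasFDerivAt f
      ((Real.exp (L (q w)) * deriv L (q w)) • ((-(1/2:ℝ)) • auxD V⁻¹ μ w)) w := by
    intro w
    have h1 : HasDerivAt (fun t => Real.exp (L t)) (Real.exp (L (q w)) * deriv L (q w)) (q w) :=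
      (Real.hasDerivAt_exp (L (q w))).comp (q w) (hLdiff (q w)).hasDerivAt
    have h2 := h1.comp_hasFDerivAt w (hq w)
    have hfe : f = fun x => Real.exp (L (q x)) := funext hf
    rw [hfe]
    exact h2
  have hfd1 : ∀ (w : Fin p → ℝ) (j : Fin p), fderiv ℝ f w (Pi.single j 1)
      = -(Real.exp (L (q w)) * deriv L (q w) * (V⁻¹ *ᵥ (w - μ)) j) := by
    intro w j
    rw [(hfD w).fderiv, ContinuousLinearMap.smul_apply, hDq_single]
    simp
  set ℓ := deriv L y with hℓ
  set l2 := deriv (deriv L) y with hl2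
  set s := Real.exp (L y) with hs
  set v := V⁻¹ *ᵥ (z - μ) with hv
  have hu : ∀ j, HasFDerivAt (fun w : Fin p → ℝ => (V⁻¹ *ᵥ (w - μ)) j)
      (∑ k, V⁻¹ j k • (ContinuousLinearMap.proj k : (Fin p → ℝ) →L[ℝ] ℝ)) z := by
    intro j
    have he : (fun w : Fin p → ℝ => (V⁻¹ *ᵥ (w - μ)) j)
        = fun w => ∑ k, V⁻¹ j k * (w k - μ k) := by
      funext w; simp [mulVec, dotProduct]
    rw [he]
    apply HasFDerivAt.fun_sum
    intro k _
    have := (((ContinuousLinearMap.proj k : (Fin p → ℝ) →L[ℝ] ℝ).hasFDerivAt (x := z)).sub_const (μ k)).const_mul (V⁻¹ j k)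
    simpa using this
  have hE : HasFDerivAt (fun w => Real.exp (L (q w)) * deriv L (q w))
      ((s * ℓ * ℓ + s * l2) • ((-(1/2:ℝ)) • auxD V⁻¹ μ z)) z := by
    have ha : HasDerivAt (fun t => Real.exp (L t)) (s * ℓ) y :=
      (Real.hasDerivAt_exp (L y)).comp y (hLdiff y).hasDerivAt
    have hb : HasDerivAt (deriv L) l2 y := (hdLdiff y).hasDerivAt
    have h1 : HasDerivAt (fun t => Real.exp (L t) * deriv L t) (s * ℓ * ℓ + s * l2) y :=
      ha.mul hb
    rw [← hqz] at h1
    exact h1.comp_hasFDerivAt z (hq z)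
  have hHij : ∀ i j, H i j = -(s * ℓ) * V⁻¹ i j + s * (ℓ * ℓ + l2) * (v i * v j) := by
    intro i j
    rw [hH i j]
    have hfun : (fun w => fderiv ℝ f w (Pi.single j 1))
        = fun w => -(Real.exp (L (q w)) * deriv L (q w) * (V⁻¹ *ᵥ (w - μ)) j) :=
      funext fun w => hfd1 w j
    rw [hfun]
    have hG := ((hE.fun_mul (hu j)).fun_neg).fderiv
    rw [hG]
    simp only [ContinuousLinearMap.neg_apply, ContinuousLinearMap.add_apply,
      ContinuousLinearMap.smul_apply, smul_eq_mul, ContinuousLinearMap.sum_apply,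
      ContinuousLinearMap.proj_apply, hDq_single, hqz, Pi.single_apply, mul_ite, mul_one, mul_zero,
      Finset.sum_ite_eq', Finset.mem_univ, if_true]
    rw [hsym j i, ← hv, ← hℓ, ← hs]
    ring
  -- positivity facts
  have hsne : s ≠ 0 := Real.exp_ne_zero _
  have hrne : -(s * ℓ) ≠ 0 := by
    simp only [neg_ne_zero]
    exact mul_ne_zero hsne hL'
  set k0 := (s * (ℓ * ℓ + l2)) / (-(s * ℓ)) with hk0
  have hHmat : H = (-(s * ℓ)) • (V⁻¹ + Matrix.replicateCol Unit (k0 • v) * Matrix.replicateRow Unit v) := by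
    ext i j
    simp only [Matrix.smul_apply, Matrix.add_apply, Matrix.mul_apply, Matrix.replicateCol_apply,
      Matrix.replicateRow_apply, Finset.univ_unique, Finset.sum_singleton, Pi.smul_apply,
      smul_eq_mul, hHij, hk0]
    field_simp
    ring
  have hdetA : IsUnit (V⁻¹).det := hApd.det_pos.ne'.isUnit
  have hVv : V *ᵥ v = z - μ := by
    rw [hv, Matrix.mulVec_mulVec, Matrix.mul_nonsing_inv V hVdet, Matrix.one_mulVec]
  have hVT : Vᵀ = V := by
    ext i j; simpa using hV.isHermitian.apply i j
  have hquad : v ⬝ᵥ V *ᵥ (k0 • v) = k0 * (-2 * y) := by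
    rw [Matrix.mulVec_smul, dotProduct_smul]
    have h1 : v ⬝ᵥ V *ᵥ v = (z - μ) ⬝ᵥ v := by
      rw [hVv, dotProduct_comm]
    rw [h1]
    have h2 : (z - μ) ⬝ᵥ v = -2 * y := by rw [hy]; ring
    rw [h2]
    simp [smul_eq_mul]
  have hentry : ((1 + Matrix.replicateRow Unit v * (V⁻¹)⁻¹ * Matrix.replicateCol Unit (k0 • v) :
      Matrix Unit Unit ℝ)) default default = 1 + k0 * (-2 * y) := by
    rw [Matrix.add_apply, Matrix.one_apply_eq]
    congr 1
    rw [Matrix.nonsing_inv_nonsing_inv V hVdet, ← hquad]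
    simp only [Matrix.mul_apply, Matrix.replicateRow_apply, Matrix.replicateCol_apply, dotProduct, mulVec,
      Finset.mul_sum, Finset.sum_mul]
    rw [Finset.sum_comm]
    exact Finset.sum_congr rfl fun i _ => Finset.sum_congr rfl fun j _ => by ring
  have hdet : H.det = (-(s * ℓ))^p * ((V⁻¹).det * (1 + k0 * (-2 * y))) := by
    rw [hHmat, Matrix.det_smul, Matrix.det_add_replicateCol_mul_replicateRow hdetA, Fintype.card_fin,
      Matrix.det_unique ((1 + Matrix.replicateRow Unit v * (V⁻¹)⁻¹ * Matrix.replicateCol Unit (k0 • v) :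
        Matrix Unit Unit ℝ)), hentry]
  have hypos : 0 < (z - μ) ⬝ᵥ v := by
    have := hApd.dotProduct_mulVec_pos hz'
    rw [hv]
    simpa using this
  have hyneg : y < 0 := by rw [hy]; nlinarith
  have hyne : y ≠ 0 := hyneg.ne
  have hlog : deriv (fun t => Real.log (deriv L t)) y = l2 / ℓ :=
    (((hdLdiff y).hasDerivAt).log hL').deriv
  rw [hlog]
  have hiff : ¬ IsUnit H.det ↔ H.det = 0 := by
    simp [isUnit_iff_ne_zero]
  rw [hiff, hdet]
  have h1 : (-(s * ℓ))^p ≠ 0 := pow_ne_zero _ hrne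
  have h2 : (V⁻¹).det ≠ 0 := hApd.det_pos.ne'
  have key : ∀ x : ℝ, (-(s * ℓ))^p * ((V⁻¹).det * x) = 0 ↔ x = 0 := by
    intro x
    rw [mul_eq_zero, mul_eq_zero]
    constructor
    · rintro (h | h | h)
      exacts [absurd h h1, absurd h h2, h]
    · intro h
      tauto
  rw [key, hk0]
  exact aux_alg s ℓ l2 y hsne hL' hyne
end

section
/- The solutions L(y) (for y < 0) of the differential equation L′(y) + (d/dy) log L′(y) = −1/(2·y) are exactly L(y) = log(a·√|y| + b) for constants a, b; equivalently, the radially symmetric densities f(z) = exp(L(−(1/2)‖z−μ‖²_{V⁻¹})) whose Hessian is singular on an open region are exactly those of the form f(z) = a′·‖z−μ‖_{V⁻¹} + b for constants a′, b. -/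
open Matrix Real

lemma aux_sqrt_neg_deriv {y : ℝ} (hy : y < 0) :
    HasDerivAt (fun t : ℝ => Real.sqrt (-t)) (-(1/(2*Real.sqrt (-y)))) y := by
  have h1 : HasDerivAt (fun t : ℝ => -t) (-1) y := (hasDerivAt_id y).neg
  have h2 : HasDerivAt Real.sqrt (1/(2*Real.sqrt (-y))) (-y) :=
    Real.hasDerivAt_sqrt (by linarith)
  simpa [mul_comm, Function.comp_def] using h2.comp y h1

lemma aux_u_deriv (a b : ℝ) {y : ℝ} (hy : y < 0) :
    HasDerivAt (fun t : ℝ => a * Real.sqrt (-t) + b)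
      (-(a/(2*Real.sqrt (-y)))) y := by
  have := ((aux_sqrt_neg_deriv hy).const_mul a).add_const b
  rw [show -(a/(2*Real.sqrt (-y))) = a * -(1/(2*Real.sqrt (-y))) by ring]; exact this

lemma aux_const (f : ℝ → ℝ) (hf : ∀ y < (0:ℝ), HasDerivAt f 0 y) :
    ∀ y < (0:ℝ), f y = f (-1) := by
  intro y hy
  refine (convex_Iio (0:ℝ)).is_const_of_fderivWithin_eq_zero
    (fun x hx => ((hf x hx).differentiableAt).differentiableWithinAt) ?_ hy (by norm_num)
  intro x hx
  rw [fderivWithin_of_isOpen isOpen_Iio hx, (hf x hx).hasFDerivAt.fderiv]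
  ext t; simp

lemma aux_ode_of_exp (L : ℝ → ℝ) (a b : ℝ)
    (hL' : ∀ y < (0:ℝ), deriv L y ≠ 0)
    (hexp : ∀ y < (0:ℝ), Real.exp (L y) = a * Real.sqrt (-y) + b) :
    ∀ y < (0:ℝ), deriv L y + deriv (fun t => Real.log (deriv L t)) y = -(1/(2*y)) := by
  have hpos : ∀ t < (0:ℝ), 0 < a * Real.sqrt (-t) + b := fun t ht =>
    (hexp t ht) ▸ Real.exp_pos _
  have ha : a ≠ 0 := by
    intro h
    apply hL' (-1) (by norm_num)
    have hev : L =ᶠ[nhds (-1:ℝ)] fun _ => Real.log b := by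
      filter_upwards [Iio_mem_nhds (show (-1:ℝ) < 0 by norm_num)] with t ht
      have h2 := hexp t ht
      rw [h, zero_mul, zero_add] at h2
      rw [← Real.log_exp (L t), h2]
    rw [hev.deriv_eq]; simp
  have hLev : ∀ t < (0:ℝ), L =ᶠ[nhds t] fun s => Real.log (a * Real.sqrt (-s) + b) := by
    intro t ht
    filter_upwards [Iio_mem_nhds ht] with s hs
    rw [← Real.log_exp (L s), hexp s hs]
  have hdL : ∀ t < (0:ℝ),
      deriv L t = -(a/(2*Real.sqrt (-t))) / (a * Real.sqrt (-t) + b) := by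
    intro t ht
    have hu := aux_u_deriv a b ht
    have := (hu.log (hpos t ht).ne').deriv
    rw [(hLev t ht).deriv_eq, this]
  intro y hy
  have hsy : 0 < Real.sqrt (-y) := Real.sqrt_pos.2 (by linarith)
  have hlogev : (fun t => Real.log (deriv L t)) =ᶠ[nhds y]
      fun t => Real.log a - Real.log 2 - Real.log (-t)/2
        - Real.log (a * Real.sqrt (-t) + b) := by
    filter_upwards [Iio_mem_nhds hy] with t ht
    have ht : t < 0 := ht
    have hst : 0 < Real.sqrt (-t) := Real.sqrt_pos.2 (by linarith)
    rw [hdL t ht,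
      Real.log_div (neg_ne_zero.2 (div_ne_zero ha (by positivity))) (hpos t ht).ne',
      Real.log_neg_eq_log,
      Real.log_div ha (by positivity),
      Real.log_mul (two_ne_zero) hst.ne',
      Real.log_sqrt (by linarith)]
    ring
  have hlogneg : HasDerivAt (fun t : ℝ => Real.log (-t)) ((-y)⁻¹ * (-1)) y :=
    (Real.hasDerivAt_log (by linarith : -y ≠ 0)).comp y ((hasDerivAt_id y).neg)
  have hlogu : HasDerivAt (fun t : ℝ => Real.log (a * Real.sqrt (-t) + b))
      (-(a/(2*Real.sqrt (-y))) / (a * Real.sqrt (-y) + b)) y :=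
    (aux_u_deriv a b hy).log (hpos y hy).ne'
  have hF : HasDerivAt (fun t : ℝ => Real.log a - Real.log 2 - Real.log (-t)/2
        - Real.log (a * Real.sqrt (-t) + b))
      (0 - ((-y)⁻¹ * (-1))/2 - (-(a/(2*Real.sqrt (-y))) / (a * Real.sqrt (-y) + b))) y :=
    ((hasDerivAt_const y (Real.log a - Real.log 2)).sub (hlogneg.div_const 2)).sub hlogu
  rw [hdL y hy, hlogev.deriv_eq, hF.deriv]
  have hyne : y ≠ 0 := hy.ne
  field_simp
  ring

lemma aux_exp_of_ode (L : ℝ → ℝ) (hL : ContDiffOn ℝ 2 L (Set.Iio 0))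
    (hL' : ∀ y < (0:ℝ), deriv L y ≠ 0)
    (hode : ∀ y < (0:ℝ),
      deriv L y + deriv (fun t => Real.log (deriv L t)) y = -(1/(2*y))) :
    ∃ a b : ℝ, ∀ y < (0:ℝ), Real.exp (L y) = a * Real.sqrt (-y) + b := by
  have hop : IsOpen (Set.Iio (0:ℝ)) := isOpen_Iio
  have hdiff : ∀ y < (0:ℝ), HasDerivAt L (deriv L y) y := fun y hy =>
    (((hL.differentiableOn (by norm_num)) y hy).differentiableAt
      (hop.mem_nhds hy)).hasDerivAt
  have hd1 : ContDiffOn ℝ 1 (deriv L) (Set.Iio 0) :=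
    hL.deriv_of_isOpen hop (by norm_num)
  have hdd : ∀ y < (0:ℝ), HasDerivAt (deriv L) (deriv (deriv L) y) y := fun y hy =>
    (((hd1.differentiableOn (by norm_num)) y hy).differentiableAt (hop.mem_nhds hy)).hasDerivAt
  have hl' : ∀ y < (0:ℝ),
      deriv (deriv L) y = deriv L y * (-(1/(2*y)) - deriv L y) := by
    intro y hy
    have h1 : deriv (fun t => Real.log (deriv L t)) y
        = deriv (deriv L) y / deriv L y := ((hdd y hy).log (hL' y hy)).deriv
    have h2 := hode y hy
    rw [h1] at h2
    have h3 : deriv (deriv L) y / deriv L y = -(1/(2*y)) - deriv L y := by linarith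
    rw [div_eq_iff (hL' y hy)] at h3
    rw [h3]; ring
  -- G := l * exp(L) * sqrt(-t) is constant
  set G : ℝ → ℝ := fun t => deriv L t * Real.exp (L t) * Real.sqrt (-t) with hGdef
  have hG : ∀ y < (0:ℝ), HasDerivAt G 0 y := by
    intro y hy
    have hs : 0 < Real.sqrt (-y) := Real.sqrt_pos.2 (by linarith)
    have hs2 : Real.sqrt (-y) * Real.sqrt (-y) = -y := Real.mul_self_sqrt (by linarith)
    have h1 := ((hdd y hy).mul ((hdiff y hy).exp)).mul (aux_sqrt_neg_deriv hy)
    refine h1.congr_deriv (Eq.symm ?_)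
    rw [hl' y hy]
    have key : -(1/(2*Real.sqrt (-y))) = Real.sqrt (-y)/(2*y) := by
      rw [eq_div_iff (by intro h; apply hy.ne; linarith : 2*y ≠ 0)]
      field_simp
      nlinarith [hs2]
    rw [key, Pi.mul_apply]
    ring
  have hGc := aux_const G hG
  set c : ℝ := G (-1) with hc
  set H : ℝ → ℝ := fun t => Real.exp (L t) + (2*c) * Real.sqrt (-t) with hHdef
  have hH : ∀ y < (0:ℝ), HasDerivAt H 0 y := by
    intro y hy
    have hs : 0 < Real.sqrt (-y) := Real.sqrt_pos.2 (by linarith)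
    have h1 := ((hdiff y hy).exp).add ((aux_sqrt_neg_deriv hy).const_mul (2*c))
    refine h1.congr_deriv (Eq.symm ?_)
    have h2 := hGc y hy
    rw [hGdef] at h2
    simp only at h2
    rw [← h2]
    field_simp
    ring
  have hHc := aux_const H hH
  refine ⟨-2*c, H (-1), fun y hy => ?_⟩
  have h2 := hHc y hy
  simp only [hHdef] at h2 ⊢
  have h1 : Real.sqrt (-(-1:ℝ)) = 1 := by norm_num
  rw [h1] at h2 ⊢ <;> linarith [h2]

lemma aux_exp_of_log (L : ℝ → ℝ) (a b : ℝ) (hL : ContDiffOn ℝ 2 L (Set.Iio 0))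
    (hL' : ∀ y < (0:ℝ), deriv L y ≠ 0)
    (hlog : ∀ y < (0:ℝ), L y = Real.log (a * Real.sqrt (-y) + b)) :
    ∃ a₂ b₂ : ℝ, ∀ y < (0:ℝ), Real.exp (L y) = a₂ * Real.sqrt (-y) + b₂ := by
  set u : ℝ → ℝ := fun t => a * Real.sqrt (-t) + b with hu
  have hu_cont : Continuous u := by
    apply Continuous.add _ continuous_const
    exact continuous_const.mul (Real.continuous_sqrt.comp continuous_neg)
  have ha : a ≠ 0 := by
    intro h
    apply hL' (-1) (by norm_num)
    have hev : L =ᶠ[nhds (-1:ℝ)] fun _ => Real.log b := by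
      filter_upwards [Iio_mem_nhds (show (-1:ℝ) < 0 by norm_num)] with t ht
      rw [hlog t ht, h, zero_mul, zero_add]
    rw [hev.deriv_eq]; simp
  have hne : ∀ t < (0:ℝ), u t ≠ 0 := by
    intro y hy hy0
    have hinj : ∀ t < (0:ℝ), t ≠ y → u t ≠ 0 := by
      intro t ht hty h0
      have hs : Real.sqrt (-t) = Real.sqrt (-y) := by
        have : a * Real.sqrt (-t) = a * Real.sqrt (-y) := by
          simp only [hu] at h0 hy0; linarith
        exact mul_left_cancel₀ ha this
      have : -t = -y := by
        have h1 := Real.sq_sqrt (by linarith : (0:ℝ) ≤ -t)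
        have h2 := Real.sq_sqrt (by linarith : (0:ℝ) ≤ -y)
        rw [← h1, ← h2, hs]
      exact hty (by linarith)
    have T1 : Filter.Tendsto u (nhdsWithin y {y}ᶜ) (nhdsWithin 0 {0}ᶜ) := by
      rw [tendsto_nhdsWithin_iff]
      constructor
      · have h := (hu_cont.tendsto y).mono_left
          (nhdsWithin_le_nhds (s := {y}ᶜ))
        rwa [hy0] at h
      · filter_upwards [mem_nhdsWithin_of_mem_nhds (Iio_mem_nhds hy),
          self_mem_nhdsWithin] with t ht hty
        exact hinj t ht hty
    have T2 : Filter.Tendsto L (nhdsWithin y {y}ᶜ) Filter.atBot := by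
      apply Filter.Tendsto.congr' _ (Real.tendsto_log_nhdsNE_zero.comp T1)
      filter_upwards [mem_nhdsWithin_of_mem_nhds (Iio_mem_nhds hy)] with t ht
      exact (hlog t ht).symm
    have T3 : Filter.Tendsto L (nhdsWithin y {y}ᶜ) (nhds (L y)) :=
      ((hL.continuousOn.continuousAt (Iio_mem_nhds hy)).tendsto).mono_left
        nhdsWithin_le_nhds
    exact not_tendsto_nhds_of_tendsto_atBot T2 (L y) T3
  have ivt : ∀ s < (0:ℝ), ∀ t < (0:ℝ), u s < 0 → 0 < u t → False := by
    intro s hs t ht h1 h2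
    have h0 : (0:ℝ) ∈ Set.uIcc (u s) (u t) := Set.mem_uIcc.2 (Or.inl ⟨h1.le, h2.le⟩)
    obtain ⟨r, hr, hr0⟩ := intermediate_value_uIcc (hu_cont.continuousOn) h0
    have hrneg : r < 0 := by
      rcases Set.mem_uIcc.1 hr with ⟨_, h⟩ | ⟨_, h⟩ <;> linarith
    exact hne r hrneg hr0
  by_cases hsign : 0 < u (-1)
  · refine ⟨a, b, fun y hy => ?_⟩
    have hpos : 0 < u y := by
      rcases (hne y hy).lt_or_gt with h | h
      · exact absurd (ivt y hy (-1) (by norm_num) h hsign) (fun x => x)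
      · exact h
    rw [hlog y hy, Real.exp_log hpos]
  · refine ⟨-a, -b, fun y hy => ?_⟩
    have hneg1 : u (-1) < 0 := (hne (-1) (by norm_num)).lt_or_gt.resolve_right hsign
    have hneg : u y < 0 := by
      rcases (hne y hy).lt_or_gt with h | h
      · exact h
      · exact absurd (ivt (-1) (by norm_num) y hy hneg1 h) (fun x => x)
    have : L y = Real.log (-(u y)) := by rw [hlog y hy, Real.log_neg_eq_log]
    rw [this, Real.exp_log (by linarith)]
    simp only [hu]; ring

lemma aux_Q_pos {p : ℕ} (V : Matrix (Fin p) (Fin p) ℝ) (hV : V.PosDef)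
    (x : Fin p → ℝ) (hx : x ≠ 0) : 0 < x ⬝ᵥ V⁻¹ *ᵥ x := by
  have := hV.inv.dotProduct_mulVec_pos hx
  simpa using this

lemma aux_Q_surj {p : ℕ} (hp : 0 < p) (V : Matrix (Fin p) (Fin p) ℝ)
    (hV : V.PosDef) (μ : Fin p → ℝ) {q : ℝ} (hq : 0 < q) :
    ∃ z : Fin p → ℝ, z ≠ μ ∧ (z - μ) ⬝ᵥ V⁻¹ *ᵥ (z - μ) = q := by
  have : NeZero p := ⟨hp.ne'⟩
  set e : Fin p → ℝ := Pi.single ⟨0, hp⟩ 1 with he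
  have he0 : e ≠ 0 := by
    intro h
    have := congrFun h ⟨0, hp⟩
    simp [he] at this
  have hc : 0 < e ⬝ᵥ V⁻¹ *ᵥ e := aux_Q_pos V hV e he0
  set c := e ⬝ᵥ V⁻¹ *ᵥ e with hcdef
  set t := Real.sqrt (q / c) with ht
  have htpos : 0 < t := Real.sqrt_pos.2 (div_pos hq hc)
  refine ⟨μ + t • e, ?_, ?_⟩
  · intro h
    have : t • e = 0 := by
      have := congrArg (· - μ) h
      simpa using this
    rcases smul_eq_zero.1 this with h | h
    · exact htpos.ne' h
    · exact he0 h
  · have hsub : (μ + t • e) - μ = t • e := by abel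
    rw [hsub, Matrix.mulVec_smul, smul_dotProduct, dotProduct_smul]
    have : t * t = q / c := Real.mul_self_sqrt (div_pos hq hc).le
    rw [smul_eq_mul, smul_eq_mul, ← mul_assoc, this, ← hcdef]
    exact div_mul_cancel₀ q hc.ne'

/-- The solutions on `y < 0` of `L′ + (log L′)′ = -1/(2y)` are exactly
`L(y) = log(a·√|y| + b)`; equivalently, the radially symmetric densities with
singular Hessian on an open region are exactly the densities linear in the
radius: `f(z) = a′·‖z-μ‖_{V⁻¹} + b`. -/
theorem singular_hessian_solutions {p : ℕ} (hp : 0 < p)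
    (V : Matrix (Fin p) (Fin p) ℝ) (hV : V.PosDef) (μ : Fin p → ℝ)
    (L : ℝ → ℝ) (hL : ContDiffOn ℝ 2 L (Set.Iio 0))
    (hL' : ∀ y < (0:ℝ), deriv L y ≠ 0) :
    ((∀ y < (0:ℝ),
        deriv L y + deriv (fun t => Real.log (deriv L t)) y = -(1 / (2 * y))) ↔
      ∃ a b : ℝ, ∀ y < (0:ℝ), L y = Real.log (a * Real.sqrt |y| + b)) ∧
    ((∀ y < (0:ℝ),
        deriv L y + deriv (fun t => Real.log (deriv L t)) y = -(1 / (2 * y))) ↔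
      ∃ a' b : ℝ, ∀ z : Fin p → ℝ, z ≠ μ →
        Real.exp (L (-(1/2) * ((z - μ) ⬝ᵥ V⁻¹ *ᵥ (z - μ)))) =
          a' * Real.sqrt ((z - μ) ⬝ᵥ V⁻¹ *ᵥ (z - μ)) + b) := by
  constructor
  · constructor
    · intro hode
      obtain ⟨a, b, hab⟩ := aux_exp_of_ode L hL hL' hode
      refine ⟨a, b, fun y hy => ?_⟩
      rw [abs_of_neg hy, ← hab y hy, Real.log_exp]
    · rintro ⟨a, b, hab⟩
      obtain ⟨a₂, b₂, h2⟩ := aux_exp_of_log L a b hL hL'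
        (fun y hy => by rw [hab y hy, abs_of_neg hy])
      exact aux_ode_of_exp L a₂ b₂ hL' h2
  · constructor
    · intro hode
      obtain ⟨a, b, hab⟩ := aux_exp_of_ode L hL hL' hode
      refine ⟨a / Real.sqrt 2, b, fun z hz => ?_⟩
      have hq : 0 < (z - μ) ⬝ᵥ V⁻¹ *ᵥ (z - μ) :=
        aux_Q_pos V hV _ (sub_ne_zero.2 hz)
      set q := (z - μ) ⬝ᵥ V⁻¹ *ᵥ (z - μ) with hqdef
      have hy : -(1/2) * q < 0 := by linarith
      rw [hab _ hy]
      have h2 : -(-(1/2) * q) = q / 2 := by ring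
      rw [h2, Real.sqrt_div hq.le]
      have hs2 : Real.sqrt 2 ≠ 0 := by positivity
      field_simp
    · rintro ⟨a', b, hzf⟩
      apply aux_ode_of_exp L (a' * Real.sqrt 2) b hL'
      intro y hy
      obtain ⟨z, hz, hQ⟩ := aux_Q_surj hp V hV μ (show (0:ℝ) < -2*y by linarith)
      have h1 := hzf z hz
      rw [hQ, show -(1/2) * (-2*y) = y by ring] at h1
      rw [h1]
      have h2 : Real.sqrt (-2*y) = Real.sqrt 2 * Real.sqrt (-y) := by
        rw [show -2*y = 2*(-y) by ring, Real.sqrt_mul (by norm_num)]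
      rw [h2]; ring
end

section
/- Let K be a nonnegative bounded I-symmetric kernel on the Euclidean unit ball S_I with ∫_{S_I} x K(x) dx = 0, and let A, B be nonsingular p×p matrices. Then for all z, μ > 0 and data points x₁,…,x_n, the kernel density estimator satisfies g_n(z; AB, K̃, μ, {x₁,…,x_n}) = g_n(B̂z; A, K̃∘B⁻¹, |det B|^{−1/p}μ, {B̂x₁,…,B̂x_n}), where K̃ is AB-symmetric, B̂ = |det B|^{−1/p}B, and g_n(z; A, K̃, μ, D) = (1/n)·Σ_j K̃((x_j − z)/μ) / (β(A,K̃)·μ^p) with β(A,K̃) = ∫_{S_A} K̃(x) dx. -/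
open MeasureTheory Matrix

/-- The kernel density estimator with metric `A`, kernel `K̃`, smoothing
parameter `μ` and data `xs`, evaluated at `z`:
`g_n(z; A, K̃, μ, xs) = (1/n)·Σ_j K̃((x_j − z)/μ) / (β(A,K̃)·μ^p)` with
`β(A,K̃) = ∫_{S_A} K̃`. -/
noncomputable def kernelEstimator {p n : ℕ} (A : Matrix (Fin p) (Fin p) ℝ)
    (Ktilde : (Fin p → ℝ) → ℝ) (μ : ℝ) (xs : Fin n → (Fin p → ℝ))
    (z : Fin p → ℝ) : ℝ :=
  ((n : ℝ)⁻¹ * ∑ j, Ktilde (μ⁻¹ • (xs j - z))) /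
    ((∫ x in {x : Fin p → ℝ | x ⬝ᵥ (Aᵀ * A) *ᵥ x ≤ 1}, Ktilde x) * μ ^ p)

lemma setIntegral_comp_mulVec {p : ℕ} (B : Matrix (Fin p) (Fin p) ℝ)
    (hB : IsUnit B.det) (f : (Fin p → ℝ) → ℝ) (S : Set (Fin p → ℝ)) :
    ∫ x in (fun x => B *ᵥ x) ⁻¹' S, f (B *ᵥ x) = |B.det|⁻¹ * ∫ y in S, f y := by
  have hdet : B.det ≠ 0 := hB.ne_zero
  let e : (Fin p → ℝ) ≃ₗ[ℝ] (Fin p → ℝ) :=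
    LinearEquiv.ofLinear (Matrix.toLin' B) (Matrix.toLin' B⁻¹)
      (by rw [← Matrix.toLin'_mul, B.mul_nonsing_inv hB, Matrix.toLin'_one])
      (by rw [← Matrix.toLin'_mul, B.nonsing_inv_mul hB, Matrix.toLin'_one])
  have hdet' : LinearMap.det (e : (Fin p → ℝ) →ₗ[ℝ] (Fin p → ℝ)) = B.det := by
    simp [e, LinearMap.det_toLin' B]
  let m : (Fin p → ℝ) ≃ᵐ (Fin p → ℝ) :=
    e.toContinuousLinearEquiv.toHomeomorph.toMeasurableEquiv
  have hme : (m : (Fin p → ℝ) → (Fin p → ℝ)) = fun x => B *ᵥ x := rfl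
  have hmap : Measure.map m volume
      = ENNReal.ofReal |B.det|⁻¹ • (volume : Measure (Fin p → ℝ)) := by
    rw [show (m : (Fin p → ℝ) → (Fin p → ℝ)) = (e : (Fin p → ℝ) →ₗ[ℝ] (Fin p → ℝ)) from rfl]
    rw [Measure.map_linearMap_addHaar_eq_smul_addHaar _ (by rw [hdet']; exact hdet), hdet',
      abs_inv]
  calc ∫ x in (fun x => B *ᵥ x) ⁻¹' S, f (B *ᵥ x)
      = ∫ x in m ⁻¹' S, f (m x) := by rw [hme]
    _ = ∫ y in S, f y ∂(Measure.map m volume) := (setIntegral_map_equiv m f S).symm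
    _ = |B.det|⁻¹ * ∫ y in S, f y := by
        rw [hmap, Measure.restrict_smul, integral_smul_measure,
          ENNReal.toReal_ofReal (by positivity), smul_eq_mul]


/-- Kernel estimation with metric `AB` is equivalent to estimation with metric
`A` on the transformed data `B̂x_j`, with rescaled smoothing parameter. -/
theorem kernel_estimator_change_of_metric {p n : ℕ} (hp : 0 < p)
    (K : (Fin p → ℝ) → ℝ)
    (hK0 : ∀ x, 0 ≤ K x) (hKb : ∃ C : ℝ, ∀ x, K x ≤ C)
    (hKsym : ∃ F : ℝ → ℝ, ∀ x, K x = F (x ⬝ᵥ x))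
    (hKmom : ∫ x in {x : Fin p → ℝ | x ⬝ᵥ x ≤ 1}, K x • x = 0)
    (A B : Matrix (Fin p) (Fin p) ℝ) (hA : IsUnit A.det) (hB : IsUnit B.det)
    (z : Fin p → ℝ) (μ : ℝ) (hμ : 0 < μ) (xs : Fin n → (Fin p → ℝ)) :
    kernelEstimator (A * B) (fun x => K ((A * B) *ᵥ x)) μ xs z =
      kernelEstimator A (fun x => K ((A * B) *ᵥ (B⁻¹ *ᵥ x)))
        (|B.det| ^ (-(1:ℝ)/p) * μ)
        (fun j => (|B.det| ^ (-(1:ℝ)/p)) • (B *ᵥ xs j))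
        ((|B.det| ^ (-(1:ℝ)/p)) • (B *ᵥ z)) := by
  have hdet : B.det ≠ 0 := hB.ne_zero
  have hd : (0:ℝ) < |B.det| := abs_pos.mpr hdet
  set c : ℝ := |B.det| ^ (-(1:ℝ)/p) with hc
  have hcpos : 0 < c := Real.rpow_pos_of_pos hd _
  have hcp : c ^ p = |B.det|⁻¹ := by
    rw [hc, ← Real.rpow_natCast (|B.det| ^ (-(1:ℝ)/p)) p, ← Real.rpow_mul hd.le]
    rw [div_mul_cancel₀ _ (by exact_mod_cast hp.ne' : (p:ℝ) ≠ 0)]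
    rw [Real.rpow_neg_one]
  -- simplify kernel on RHS
  have hker : ∀ x : Fin p → ℝ, (A * B) *ᵥ (B⁻¹ *ᵥ x) = A *ᵥ x := by
    intro x
    rw [mulVec_mulVec, Matrix.mul_assoc, B.mul_nonsing_inv hB, Matrix.mul_one]
  unfold kernelEstimator
  congr 1
  · -- numerators
    congr 1
    refine Finset.sum_congr rfl fun j _ => ?_
    have h1 : (c * μ)⁻¹ • (c • (B *ᵥ xs j) - c • (B *ᵥ z))
        = μ⁻¹ • (B *ᵥ (xs j - z)) := by
      rw [← smul_sub, ← mulVec_sub, smul_smul, mul_inv, mul_comm c⁻¹ μ⁻¹,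
        mul_assoc, inv_mul_cancel₀ hcpos.ne', mul_one]
    beta_reduce
    rw [hker, h1, mulVec_smul, mulVec_smul, mulVec_mulVec]
  · -- denominators
    have hset : {x : Fin p → ℝ | x ⬝ᵥ ((A * B)ᵀ * (A * B)) *ᵥ x ≤ 1}
        = (fun x => B *ᵥ x) ⁻¹' {x : Fin p → ℝ | x ⬝ᵥ (Aᵀ * A) *ᵥ x ≤ 1} := by
      ext x
      simp only [Set.mem_setOf_eq, Set.mem_preimage]
      rw [transpose_mul, Matrix.mul_assoc, ← Matrix.mul_assoc Aᵀ A B,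
        ← mulVec_mulVec, ← mulVec_mulVec, dotProduct_mulVec x Bᵀ, vecMul_transpose]
    have key : (∫ x in {x : Fin p → ℝ | x ⬝ᵥ ((A * B)ᵀ * (A * B)) *ᵥ x ≤ 1},
          K ((A * B) *ᵥ x))
        = |B.det|⁻¹ * ∫ x in {x : Fin p → ℝ | x ⬝ᵥ (Aᵀ * A) *ᵥ x ≤ 1}, K (A *ᵥ x) := by
      rw [hset]
      have h2 := setIntegral_comp_mulVec B hB (fun y => K (A *ᵥ y))
        {x : Fin p → ℝ | x ⬝ᵥ (Aᵀ * A) *ᵥ x ≤ 1}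
      simp only [mulVec_mulVec] at h2
      exact h2
    rw [key]
    have hker' : (fun x => K ((A * B) *ᵥ (B⁻¹ *ᵥ x))) = fun x => K (A *ᵥ x) := by
      funext x; rw [hker]
    simp only [hker']
    rw [mul_pow, hcp]
    ring
end
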